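/- Let K be a positive integer and let f_{1,μ}, f_{2,μ} : ℝ⁸ → ℂ^{K×K} (μ = 0,1,2,3) be twice continuously differentiable functions satisfying the symmetry relation ∂f_{2,ν}/∂x_1^μ = ∂f_{1,μ}/∂x_2^ν for all μ, ν = 0,…,3 on ℝ⁸. Define g_{j,μν} := ∂f_{j,ν}/∂x_j^μ − ∂f_{j,μ}/∂x_j^ν for j = 1,2. Then g_{1,μν} is independent of x_2 and g_{2,μν} is independent of x_1; that is, g_{1,μν}(x_1,x_2) = g_{1,μν}(x_1,x_2') and g_{2,μν}(x_1,x_2) = g_{2,μν}(x_1',x_2) for all x_1, x_1', x_2, x_2' ∈ ℝ⁴ and all μ,ν. -/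

import Mathlib

/-!
Differentiate `g_{1,μν}` along `x_2^κ`. Commuting mixed partials (Schwarz) and using the symmetry
relation, `∂_{2κ} ∂_{1μ} f_{1,ν} = ∂_{1μ} ∂_{2κ} f_{1,ν} = ∂_{1μ} ∂_{1ν} f_{2,κ}`, which is symmetric
in `μ, ν`; hence `∂_{2κ} g_{1,μν} = 0` for every `κ`, and `g_{1,μν}` is constant in `x_2` by the
mean value theorem. The same argument with the roles of the two particles exchanged handles `g_2`.
-/

open Matrix

noncomputable section

attribute [local instance] Matrix.normedAddCommGroup Matrix.normedSpace

/-- Two-particle configuration space-time `ℝ⁸ = ℝ⁴ × ℝ⁴`. -/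
abbrev Pt := (Fin 4 → ℝ) × (Fin 4 → ℝ)

/-- The coordinate direction `x_k^μ` in `ℝ⁸`. -/
def dir (k : Fin 2) (μ : Fin 4) : Pt :=
  if k = 0 then (Pi.single μ 1, 0) else (0, Pi.single μ 1)

/-- Partial derivative `∂f/∂x_k^μ` on `ℝ⁸`. -/
def pdk {F : Type*} [NormedAddCommGroup F] [NormedSpace ℝ F]
    (k : Fin 2) (μ : Fin 4) (f : Pt → F) (X : Pt) : F :=
  fderiv ℝ f X (dir k μ)

section Calculus

variable {E F : Type*} [NormedAddCommGroup E] [NormedSpace ℝ E] [NormedAddCommGroup F]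
  [NormedSpace ℝ F]

theorem ContDiff.differentiable_fderiv_apply {f : E → F} (hf : ContDiff ℝ 2 f) (v : E) :
    Differentiable ℝ (fun x => fderiv ℝ f x v) :=
  ((hf.fderiv_right (m := 1) (by norm_num)).differentiable one_ne_zero).clm_apply
    (differentiable_const v)

theorem ContDiff.fderiv_fderiv_apply_comm {f : E → F} (hf : ContDiff ℝ 2 f) (v w x : E) :
    fderiv ℝ (fun y => fderiv ℝ f y v) x w = fderiv ℝ (fun y => fderiv ℝ f y w) x v := by
  have hdf := (hf.fderiv_right (m := 1) (by norm_num)).differentiable one_ne_zero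
  rw [fderiv_clm_apply (hdf x) (differentiableAt_const v),
    fderiv_clm_apply (hdf x) (differentiableAt_const w)]
  simpa using (hf.contDiffAt.isSymmSndFDerivAt (by simp)).eq w v

theorem Differentiable.apply_add_eq_of_fderiv_eq_zero_on_span {s : Set E} {G : E → F}
    (hG : Differentiable ℝ G) (h : ∀ x, ∀ v ∈ s, fderiv ℝ G x v = 0) {v : E}
    (hv : v ∈ Submodule.span ℝ s) (x : E) : G (x + v) = G x := by
  have hv_ker : ∀ y, fderiv ℝ G y v = 0 := fun y =>
    (Submodule.span_le (p := LinearMap.ker (fderiv ℝ G y).toLinearMap)).mpr (h y) hv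
  have hline : ∀ t : ℝ, HasDerivAt (fun t : ℝ => G (x + t • v)) 0 t := fun t => by
    simpa [hv_ker, Function.comp_def] using
      (hG _).hasFDerivAt.comp_hasDerivAt t (((hasDerivAt_id' t).smul_const v).const_add x)
  simpa using is_const_of_deriv_eq_zero (fun t => (hline t).differentiableAt)
    (fun t => (hline t).deriv) 1 0

end Calculus

theorem sum_smul_dir_zero (w : Fin 4 → ℝ) : ∑ κ, w κ • dir 0 κ = (w, 0) := by
  simp [dir, Prod.ext_iff, Prod.fst_sum, Prod.snd_sum, ← pi_eq_sum_univ']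

theorem sum_smul_dir_one (w : Fin 4 → ℝ) : ∑ κ, w κ • dir 1 κ = (0, w) := by
  simp [dir, Prod.ext_iff, Prod.fst_sum, Prod.snd_sum, ← pi_eq_sum_univ']

section Partials

variable {F : Type*} [NormedAddCommGroup F] [NormedSpace ℝ F]

theorem apply_eq_of_pdk_zero_eq_zero {G : Pt → F} (hG : Differentiable ℝ G)
    (h : ∀ κ, pdk 0 κ G = 0) (x₁ x₁' x₂ : Fin 4 → ℝ) : G (x₁, x₂) = G (x₁', x₂) := by
  have hmem : ((x₁' - x₁, 0) : Pt) ∈ Submodule.span ℝ (Set.range (dir 0)) :=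
    (Submodule.mem_span_range_iff_exists_fun ℝ).mpr ⟨_, sum_smul_dir_zero _⟩
  simpa using (hG.apply_add_eq_of_fderiv_eq_zero_on_span
    (by rintro X _ ⟨κ, rfl⟩; exact congrFun (h κ) X) hmem (x₁, x₂)).symm

theorem apply_eq_of_pdk_one_eq_zero {G : Pt → F} (hG : Differentiable ℝ G)
    (h : ∀ κ, pdk 1 κ G = 0) (x₁ x₂ x₂' : Fin 4 → ℝ) : G (x₁, x₂) = G (x₁, x₂') := by
  have hmem : ((0, x₂' - x₂) : Pt) ∈ Submodule.span ℝ (Set.range (dir 1)) :=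
    (Submodule.mem_span_range_iff_exists_fun ℝ).mpr ⟨_, sum_smul_dir_one _⟩
  simpa using (hG.apply_add_eq_of_fderiv_eq_zero_on_span
    (by rintro X _ ⟨κ, rfl⟩; exact congrFun (h κ) X) hmem (x₁, x₂)).symm

theorem ContDiff.differentiable_pdk {f : Pt → F} (hf : ContDiff ℝ 2 f) (k : Fin 2) (μ : Fin 4) :
    Differentiable ℝ (pdk k μ f) :=
  hf.differentiable_fderiv_apply (dir k μ)

theorem ContDiff.pdk_comm {f : Pt → F} (hf : ContDiff ℝ 2 f) (k k' : Fin 2) (μ μ' : Fin 4) :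
    pdk k μ (pdk k' μ' f) = pdk k' μ' (pdk k μ f) :=
  funext fun X => hf.fderiv_fderiv_apply_comm (dir k' μ') (dir k μ) X

theorem pdk_sub {f g : Pt → F} (hf : Differentiable ℝ f) (hg : Differentiable ℝ g) (k : Fin 2)
    (μ : Fin 4) : pdk k μ (f - g) = pdk k μ f - pdk k μ g :=
  funext fun X => by simp [pdk, fderiv_sub (hf X) (hg X)]

def curl (k : Fin 2) (f : Fin 4 → Pt → F) (μ ν : Fin 4) : Pt → F :=
  pdk k μ (f ν) - pdk k ν (f μ)

variable {f f' : Fin 4 → Pt → F} (hf : ∀ μ, ContDiff ℝ 2 (f μ))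
include hf

theorem differentiable_curl (k : Fin 2) (μ ν : Fin 4) : Differentiable ℝ (curl k f μ ν) :=
  ((hf ν).differentiable_pdk k μ).sub ((hf μ).differentiable_pdk k ν)

theorem pdk_curl_eq_zero (hf' : ∀ μ, ContDiff ℝ 2 (f' μ)) {k k' : Fin 2}
    (hcross : ∀ ν κ, pdk k' κ (f ν) = pdk k ν (f' κ)) (μ ν κ : Fin 4) :
    pdk k' κ (curl k f μ ν) = 0 := by
  have hmixed : ∀ μ ν, pdk k' κ (pdk k μ (f ν)) = pdk k μ (pdk k ν (f' κ)) := fun μ ν => by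
    rw [(hf ν).pdk_comm, hcross]
  rw [curl, pdk_sub ((hf ν).differentiable_pdk k μ) ((hf μ).differentiable_pdk k ν), hmixed,
    hmixed, (hf' κ).pdk_comm k k μ ν, sub_self]

end Partials

theorem curl_parts_are_local_general
    (K : ℕ)
    (f₁ f₂ : Fin 4 → Pt → Matrix (Fin K) (Fin K) ℂ)
    (hf₁ : ∀ μ, ContDiff ℝ 2 (f₁ μ)) (hf₂ : ∀ μ, ContDiff ℝ 2 (f₂ μ))
    (hsym : ∀ μ ν : Fin 4, ∀ X : Pt, pdk 0 μ (f₂ ν) X = pdk 1 ν (f₁ μ) X) :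
    (∀ μ ν : Fin 4, ∀ x₁ x₂ x₂' : Fin 4 → ℝ,
        pdk 0 μ (f₁ ν) (x₁, x₂) - pdk 0 ν (f₁ μ) (x₁, x₂)
          = pdk 0 μ (f₁ ν) (x₁, x₂') - pdk 0 ν (f₁ μ) (x₁, x₂')) ∧
    (∀ μ ν : Fin 4, ∀ x₁ x₁' x₂ : Fin 4 → ℝ,
        pdk 1 μ (f₂ ν) (x₁, x₂) - pdk 1 ν (f₂ μ) (x₁, x₂)
          = pdk 1 μ (f₂ ν) (x₁', x₂) - pdk 1 ν (f₂ μ) (x₁', x₂)) := by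
  have hsym' : ∀ μ ν, pdk 0 μ (f₂ ν) = pdk 1 ν (f₁ μ) := fun μ ν => funext (hsym μ ν)
  refine ⟨fun μ ν x₁ x₂ x₂' => ?_, fun μ ν x₁ x₁' x₂ => ?_⟩
  · exact apply_eq_of_pdk_one_eq_zero (differentiable_curl hf₁ 0 μ ν)
      (pdk_curl_eq_zero hf₁ hf₂ (fun ν κ => (hsym' ν κ).symm) μ ν) x₁ x₂ x₂'
  · exact apply_eq_of_pdk_zero_eq_zero (differentiable_curl hf₂ 1 μ ν)
      (pdk_curl_eq_zero hf₂ hf₁ (fun ν κ => hsym' κ ν) μ ν) x₁ x₁' x₂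

theorem curl_parts_are_local
    (K : ℕ) (hK : 0 < K)
    (f₁ f₂ : Fin 4 → Pt → Matrix (Fin K) (Fin K) ℂ)
    (hf₁ : ∀ μ, ContDiff ℝ 2 (f₁ μ)) (hf₂ : ∀ μ, ContDiff ℝ 2 (f₂ μ))
    (hsym : ∀ μ ν : Fin 4, ∀ X : Pt, pdk 0 μ (f₂ ν) X = pdk 1 ν (f₁ μ) X) :
    (∀ μ ν : Fin 4, ∀ x₁ x₂ x₂' : Fin 4 → ℝ,
        pdk 0 μ (f₁ ν) (x₁, x₂) - pdk 0 ν (f₁ μ) (x₁, x₂)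
          = pdk 0 μ (f₁ ν) (x₁, x₂') - pdk 0 ν (f₁ μ) (x₁, x₂')) ∧
    (∀ μ ν : Fin 4, ∀ x₁ x₁' x₂ : Fin 4 → ℝ,
        pdk 1 μ (f₂ ν) (x₁, x₂) - pdk 1 ν (f₂ μ) (x₁, x₂)
          = pdk 1 μ (f₂ ν) (x₁', x₂) - pdk 1 ν (f₂ μ) (x₁', x₂)) :=
  curl_parts_are_local_general K f₁ f₂ hf₁ hf₂ hsym
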